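/- Let L be a cubic algebra and g, h ∈ L such that the meet g ∧ h exists in L and g ∨ h = 1. Then the meet g ∧ Δ(1, h) exists and Δ(g, g ∧ h) = g ∧ Δ(1, h). -/

import Mathlib

universe u

/-- A cubic algebra: a join-semilattice with greatest element `⊤` and a binary
operation `Δ` satisfying the axioms of Bailey–Oliveira. `dot x y` is the derived
implication operation `x·y = Δ(⊤, Δ(x ⊔ y, y)) ⊔ y`. -/
class CubicAlgebra (L : Type u) extends SemilatticeSup L, OrderTop L where
  Δ : L → L → L
  dot : L → L → L
  dot_def : ∀ x y : L, dot x y = Δ ⊤ (Δ (x ⊔ y) y) ⊔ y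
  Δ_join : ∀ x y : L, x ≤ y → Δ y x ⊔ x = y
  Δ_comp : ∀ x y z : L, x ≤ y → y ≤ z → Δ z (Δ y x) = Δ (Δ z y) (Δ z x)
  Δ_invol : ∀ x y : L, x ≤ y → Δ y (Δ y x) = x
  Δ_mono : ∀ x y z : L, x ≤ y → y ≤ z → Δ z x ≤ Δ z y
  dot_dot : ∀ x y : L, dot (dot x y) y = x ⊔ y
  dot_exch : ∀ x y z : L, dot x (dot y z) = dot y (dot x z)

namespace CubicAlgebra

variable {L : Type u} [CubicAlgebra L]

/-- `a ∼ b` iff `Δ(a ⊔ b, a) = b`. -/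
def sim (a b : L) : Prop := Δ (a ⊔ b) a = b

/-- `m` is the greatest lower bound of `a` and `b`. -/
def IsMeet (a b m : L) : Prop := m ≤ a ∧ m ≤ b ∧ ∀ c : L, c ≤ a → c ≤ b → c ≤ m

/-- A special subalgebra of a cubic algebra. -/
structure IsSpecial (S : Set L) : Prop where
  top_mem : (⊤ : L) ∈ S
  upward : ∀ x ∈ S, ∀ y : L, x ≤ y → y ∈ S
  dot_mem : ∀ x ∈ S, ∀ y ∈ S, dot x y ∈ S
  compat : ∀ x ∈ S, ∀ y ∈ S, x ⊔ Δ ⊤ y = ⊤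
  meet_mem : ∀ x ∈ S, ∀ y ∈ S, ∀ m : L, IsMeet x y m → m ∈ S

/-- `A ∨ B` for sets: all existing meets `a ∧ b`, `a ∈ A`, `b ∈ B`. -/
def svee (A B : Set L) : Set L := {z | ∃ a ∈ A, ∃ b ∈ B, IsMeet a b z}

/-- `J → I` for sets. -/
def sarrow (J I : Set L) : Set L := {h | h ∈ I ∧ ∀ g ∈ J, h ⊔ g = ⊤}

/-- `Δ(J, I) := J ∨ Δ(⊤, J → I)`. -/
def sDelta (J I : Set L) : Set L := svee J ((fun b => Δ ⊤ b) '' sarrow J I)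

/-- `I_g := {Δ(g ⊔ f, f) : f ∈ I}`. -/
def shift (I : Set L) (g : L) : Set L := {z | ∃ f ∈ I, z = Δ (g ⊔ f) f}

end CubicAlgebra

/-!
Write `x·y` for `dot x y`; it behaves like an implication (`x·y = ⊤ ↔ x ≤ y`, antitone in `x`,
monotone in `y`). The heart of the argument is that `g·m = h` whenever `m = g ∧ h` and
`g ⊔ h = ⊤`. For `m ≤ g` we have `g·m = Δ(⊤, Δ(g, m)) ⊔ m`, so `Δ(⊤, Δ(g, m)) ≤ h`, i.e.
`Δ(g, m) ≤ Δ(⊤, h)`. Conversely, if `c ≤ g` and `c ≤ Δ(⊤, h)`, the same identity for `g·c`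
gives `Δ(g, c) ≤ h`, hence `Δ(g, c) ≤ m`; since `Δ(g, -)` is an order-involution of the
interval below `g`, this means `c ≤ Δ(g, m)`.
-/

namespace CubicAlgebra

variable {L : Type u} [CubicAlgebra L] {a b c g h m x y z : L}

lemma top_dot (y : L) : dot ⊤ y = y := by
  rw [dot_def, top_sup_eq, Δ_invol y ⊤ le_top, sup_idem]

lemma dot_self (y : L) : dot y y = ⊤ := by
  simpa only [top_dot, top_sup_eq] using dot_dot ⊤ y

lemma le_dot (x y : L) : y ≤ dot x y := by
  rw [dot_def]
  exact le_sup_right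

lemma dot_dot_of_le (h : y ≤ x) : dot (dot x y) y = x := by
  rw [dot_dot, sup_eq_left.mpr h]

lemma dot_eq_top_iff : dot x y = ⊤ ↔ x ≤ y := by
  constructor
  · intro h
    have hxy := dot_dot x y
    rw [h, top_dot] at hxy
    exact sup_eq_right.mp hxy.symm
  · intro h
    have hxy := dot_dot (dot x y) y
    rw [dot_dot x y, sup_eq_right.mpr h, dot_self, sup_eq_left.mpr (le_dot x y)] at hxy
    exact hxy.symm

lemma sup_eq_top_of_dot_eq (h : dot x y = y) : x ⊔ y = ⊤ := by
  rw [← dot_dot, h, dot_self]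

lemma dot_le_dot_right (h : a ≤ b) : dot b c ≤ dot a c := by
  rw [← dot_eq_top_iff, dot_exch, dot_dot]
  exact dot_eq_top_iff.mpr (h.trans le_sup_left)

lemma dot_le_dot_left (h : b ≤ c) : dot a b ≤ dot a c :=
  calc dot a b ≤ dot (dot c b) (dot a b) := le_dot _ _
    _ = dot a (dot (dot c b) b) := dot_exch _ _ _
    _ = dot a c := by rw [dot_dot_of_le h]

lemma dot_le_of_sup_eq_top (hxa : x ≤ a) (hab : a ⊔ b = ⊤) : dot b x ≤ a :=
  (dot_le_dot_left hxa).trans <| dot_eq_top_iff.mp <| by rw [dot_dot, sup_comm, hab]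

lemma dot_dot_le_of_le (hmg : m ≤ g) (hmy : m ≤ y) : dot (dot g y) m ≤ g := by
  have hg : g ≤ dot (dot g m) y :=
    (dot_dot_of_le hmg).symm.le.trans (dot_le_dot_left hmy)
  have hm : m ≤ dot g y := hmy.trans (le_dot g y)
  rw [← dot_eq_top_iff]
  calc dot (dot (dot g y) m) g = dot (dot (dot g y) m) (dot (dot g m) m) := by
        rw [dot_dot_of_le hmg]
    _ = dot (dot g m) (dot g y) := by rw [dot_exch, dot_dot_of_le hm]
    _ = ⊤ := by rw [dot_exch, dot_eq_top_iff.mpr hg]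

theorem dot_eq_of_isMeet (hm : IsMeet g h m) (hgh : g ⊔ h = ⊤) : dot g m = h := by
  obtain ⟨hmg, hmh, hglb⟩ := hm
  have hvh : dot g m ≤ h := dot_le_of_sup_eq_top hmh (sup_comm g h ▸ hgh)
  have hmv : m ≤ dot g m := le_dot g m
  have hk : m ≤ dot h (dot g m) := hmv.trans (le_dot h _)
  -- `k·m` with `k = h·(g·m)` lies below both `g` and `h`, so it is `m`; this forces `k = ⊤`.
  have hkm : dot (dot h (dot g m)) m = m := by
    refine le_antisymm (hglb _ ?_ (dot_dot_le_of_le hmh hmv)) (le_dot _ m)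
    exact (dot_le_dot_right (le_dot h _)).trans (dot_dot_of_le hmg).le
  have hk_top : dot h (dot g m) = ⊤ := by
    rw [← sup_eq_left.mpr hk]
    exact sup_eq_top_of_dot_eq hkm
  exact le_antisymm hvh (dot_eq_top_iff.mp hk_top)

lemma Δ_le (h : x ≤ y) : Δ y x ≤ y :=
  le_sup_left.trans (Δ_join x y h).le

lemma le_Δ_iff (hx : x ≤ z) (hy : y ≤ z) : x ≤ Δ z y ↔ Δ z x ≤ y := by
  constructor
  · intro h
    simpa only [Δ_invol y z hy] using Δ_mono x (Δ z y) z h (Δ_le hy)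
  · intro h
    simpa only [Δ_invol x z hx] using Δ_mono (Δ z x) y z h hy

lemma Δ_top_le_Δ_top_iff : Δ ⊤ x ≤ Δ ⊤ y ↔ x ≤ y := by
  rw [le_Δ_iff le_top le_top, Δ_invol x ⊤ le_top]

lemma Δ_top_sup_eq_top (hxy : x ≤ y) (hxz : x ≤ z) : Δ ⊤ y ⊔ z = ⊤ :=
  top_le_iff.mp <| (Δ_join x ⊤ le_top).symm.le.trans <|
    sup_le_sup (Δ_top_le_Δ_top_iff.mpr hxy) hxz

lemma Δ_top_Δ_le_dot (h : y ≤ x) : Δ ⊤ (Δ x y) ≤ dot x y := by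
  rw [dot_def, sup_eq_left.mpr h]
  exact le_sup_left

end CubicAlgebra

open CubicAlgebra in
/-- If `g ∧ h` exists and `g ⊔ h = ⊤`, then `g ∧ Δ(⊤, h)` exists and equals
`Δ(g, g ∧ h)`. -/
theorem delta_meet {L : Type u} [CubicAlgebra L] (g h m : L)
    (hm : IsMeet g h m) (hgh : g ⊔ h = ⊤) :
    IsMeet g (Δ ⊤ h) (Δ g m) := by
  have hgm : dot g m = h := dot_eq_of_isMeet hm hgh
  obtain ⟨hmg, hmh, hglb⟩ := hm
  refine ⟨Δ_le hmg, ?_, fun c hcg hch => ?_⟩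
  · exact (le_Δ_iff le_top le_top).mpr (hgm ▸ Δ_top_Δ_le_dot hmg)
  · have hgc : dot g c ≤ Δ ⊤ h := dot_le_of_sup_eq_top hch (Δ_top_sup_eq_top hmh hmg)
    have hΔc : Δ g c ≤ h := Δ_top_le_Δ_top_iff.mp ((Δ_top_Δ_le_dot hcg).trans hgc)
    exact (le_Δ_iff hcg hmg).mpr (hglb _ (Δ_le hcg) hΔc)
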